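/- arXiv:1003.3271 — 3 statements merged into one kernel-verified Lean document; each statement's English description precedes it below -/
import Mathlib

section
/- For real s with |s| < 1, ₂F₁(2/3, 4/3; 5/3; s) = 2(1-s)^{-1/3} - ₂F₁(2/3, 1/3; 5/3; s). -/
open scoped Nat

open Filter Polynomial

/-- Normalized Pochhammer coefficient `(r)_n / n!`. -/
noncomputable def pc (r : ℝ) (n : ℕ) : ℝ := (ascPochhammer ℝ n).eval r / (n ! : ℝ)

lemma pc_pos {r : ℝ} (hr : 0 < r) (n : ℕ) : 0 < pc r n := by
  unfold pc
  have h1 := ascPochhammer_pos n r hr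
  have h2 : (0:ℝ) < (n ! : ℝ) := by exact_mod_cast n.factorial_pos
  positivity

lemma pc_zero (r : ℝ) : pc r 0 = 1 := by simp [pc]

lemma pc_rec (r : ℝ) (n : ℕ) : pc r (n + 1) * ((n : ℝ) + 1) = (r + n) * pc r n := by
  unfold pc
  have hf : ((n ! : ℕ) : ℝ) ≠ 0 := by exact_mod_cast n.factorial_ne_zero
  have hn1 : ((n:ℝ) + 1) ≠ 0 := by positivity
  rw [ascPochhammer_succ_eval, Nat.factorial_succ]
  push_cast
  field_simp

lemma asc_succ_left (r : ℝ) (n : ℕ) :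
    (ascPochhammer ℝ (n + 1)).eval r = r * (ascPochhammer ℝ n).eval (r + 1) := by
  induction n with
  | zero => simp [ascPochhammer_succ_eval]
  | succ n ih =>
      rw [ascPochhammer_succ_eval, ih, ascPochhammer_succ_eval]
      push_cast
      ring

lemma pc_shift (r : ℝ) (n : ℕ) : pc r (n + 1) * ((n : ℝ) + 1) = r * pc (r + 1) n := by
  unfold pc
  have hf : ((n ! : ℕ) : ℝ) ≠ 0 := by exact_mod_cast n.factorial_ne_zero
  have hn1 : ((n:ℝ) + 1) ≠ 0 := by positivity
  rw [asc_succ_left, Nat.factorial_succ]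
  push_cast
  field_simp

lemma tendsto_ratio (r : ℝ) :
    Tendsto (fun n : ℕ => (r + n) / ((n : ℝ) + 1)) atTop (nhds 1) := by
  have e : (fun n : ℕ => (r + n) / ((n : ℝ) + 1))
      = fun n : ℕ => 1 + (r - 1) * (1 / ((n : ℝ) + 1)) := by
    funext n
    have hn1 : ((n:ℝ) + 1) ≠ 0 := by positivity
    field_simp
    ring
  rw [e]
  have h0 : Tendsto (fun n : ℕ => 1 / ((n : ℝ) + 1)) atTop (nhds 0) :=
    tendsto_one_div_add_atTop_nhds_zero_nat
  have := tendsto_const_nhds (x := (1:ℝ)) (f := atTop (α := ℕ)) |>.add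
    ((h0.const_mul (r - 1)))
  simpa using this

lemma summable_pc {r : ℝ} (hr : 0 < r) {s : ℝ} (hs : |s| < 1) :
    Summable (fun n => pc r n * s ^ n) := by
  set l := (1 + |s|) / 2 with hl
  have hsl : |s| < l := by rw [hl]; linarith
  have hl1 : l < 1 := by rw [hl]; linarith
  apply summable_of_ratio_norm_eventually_le hl1
  have hT : Tendsto (fun n : ℕ => (r + n) / ((n : ℝ) + 1) * |s|) atTop (nhds (1 * |s|)) :=
    (tendsto_ratio r).mul_const _
  rw [one_mul] at hT
  filter_upwards [hT.eventually_le_const hsl] with n hn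
  have key : ‖pc r (n+1) * s ^ (n+1)‖ = ((r + n) / ((n : ℝ) + 1) * |s|) * ‖pc r n * s ^ n‖ := by
    have hn1 : ((n:ℝ) + 1) ≠ 0 := by positivity
    simp only [norm_mul, norm_pow, Real.norm_eq_abs]
    rw [abs_of_pos (pc_pos hr (n+1)), abs_of_pos (pc_pos hr n)]
    have h1 : pc r (n+1) = (r + n) * pc r n / ((n:ℝ) + 1) := by
      field_simp [← pc_rec r n]
      exact pc_rec r n
    rw [h1, pow_succ]
    field_simp
  rw [key]
  have hnn : (0:ℝ) ≤ ‖pc r n * s ^ n‖ := norm_nonneg _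
  exact mul_le_mul_of_nonneg_right hn hnn

lemma summable_d {r : ℝ} (hr : 0 < r) {x : ℝ} (hx : |x| < 1) :
    Summable (fun n : ℕ => pc r n * ((n : ℝ) * x ^ (n - 1))) := by
  rw [← summable_nat_add_iff 1]
  have hS : Summable (fun n : ℕ => r * (pc (r + 1) n * x ^ n)) :=
    (summable_pc (by linarith) hx).mul_left r
  apply hS.congr
  intro n
  have h := pc_shift r n
  have hcast : ((n + 1 : ℕ) : ℝ) = (n : ℝ) + 1 := by push_cast; ring
  calc r * (pc (r + 1) n * x ^ n) = (pc r (n+1) * ((n:ℝ) + 1)) * x ^ n := by rw [h]; ring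
    _ = pc r (n + 1) * (((n:ℕ) + 1 : ℕ) * x ^ (n + 1 - 1)) := by
        rw [Nat.add_sub_cancel, hcast]; ring

lemma hasDerivAt_F {r : ℝ} (hr : 0 < r) {s : ℝ} (hs : |s| < 1) :
    HasDerivAt (fun x : ℝ => ∑' n : ℕ, pc r n * x ^ n)
      (∑' n : ℕ, pc r n * ((n : ℝ) * s ^ (n - 1))) s := by
  set b := (1 + |s|) / 2 with hb
  have hb0 : 0 < b := by positivity
  have hsb : |s| < b := by rw [hb]; linarith
  have hb1 : b < 1 := by rw [hb]; linarith
  have hbabs : |b| < 1 := by rwa [abs_of_pos hb0]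
  apply hasDerivAt_tsum_of_isPreconnected
    (u := fun n : ℕ => pc r n * ((n : ℝ) * b ^ (n - 1)))
    (summable_d hr hbabs) Metric.isOpen_ball
    ((convex_ball (0:ℝ) b).isPreconnected)
    (fun n y _ => (hasDerivAt_pow n y).const_mul (pc r n))
    (fun n y hy => ?_) (Metric.mem_ball_self hb0)
    (summable_pc hr (by simp))
    (by simpa [Real.dist_eq] using hsb)
  have hyb : |y| ≤ b := by
    have := Metric.mem_ball.1 hy
    rw [Real.dist_eq, sub_zero] at this
    exact this.le
  have : ‖pc r n * ((n : ℝ) * y ^ (n - 1))‖ = pc r n * ((n : ℝ) * |y| ^ (n - 1)) := by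
    rw [norm_mul, norm_mul, norm_pow, Real.norm_eq_abs, Real.norm_eq_abs, Real.norm_eq_abs,
      abs_of_pos (pc_pos hr n), Nat.abs_cast]
  rw [this]
  have hpow := pow_le_pow_left₀ (abs_nonneg y) hyb (n - 1)
  have h1 : (0:ℝ) ≤ (n : ℝ) := n.cast_nonneg
  have h2 := (pc_pos hr n).le
  exact mul_le_mul_of_nonneg_left (mul_le_mul_of_nonneg_left hpow h1) h2

/-- The generalized binomial series. -/
lemma binom_series {r : ℝ} (hr : 0 < r) {s : ℝ} (hs : |s| < 1) :
    (∑' n : ℕ, pc r n * s ^ n) = (1 - s) ^ (-r) := by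
  set F : ℝ → ℝ := fun x => ∑' n : ℕ, pc r n * x ^ n with hF
  set D : ℝ → ℝ := fun x => ∑' n : ℕ, pc r n * ((n : ℝ) * x ^ (n - 1)) with hD
  have hODE : ∀ x : ℝ, |x| < 1 → (1 - x) * D x = r * F x := by
    intro x hx
    have S1 : Summable (fun n => pc r n * x ^ n) := summable_pc hr hx
    have Sd : Summable (fun n : ℕ => pc r n * ((n : ℝ) * x ^ (n - 1))) := summable_d hr hx
    have hterm : ∀ n : ℕ, pc r (n + 1) * (((n + 1 : ℕ) : ℝ) * x ^ (n + 1 - 1))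
        = r * (pc r n * x ^ n) + x * (pc r n * ((n : ℝ) * x ^ (n - 1))) := by
      intro n
      cases n with
      | zero =>
          have h1 : pc r 1 = r := by
            have h := pc_rec r 0
            simpa [pc_zero] using h
          simp [h1, pc_zero]
      | succ m =>
          have h := pc_rec r (m + 1)
          push_cast at h
          simp only [Nat.add_sub_cancel]
          push_cast
          linear_combination (x ^ (m + 1)) * h
    have hDx : D x = r * F x + x * D x := by
      have h0 := Summable.tsum_eq_zero_add Sd
      have hz : pc r 0 * ((0:ℕ) * x ^ (0 - 1)) = 0 := by simp
      rw [hD] at *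
      calc (∑' n : ℕ, pc r n * ((n : ℝ) * x ^ (n - 1)))
          = pc r 0 * (((0:ℕ):ℝ) * x ^ (0 - 1))
            + ∑' n : ℕ, pc r (n+1) * (((n + 1 : ℕ):ℝ) * x ^ (n + 1 - 1)) := h0
        _ = ∑' n : ℕ, (r * (pc r n * x ^ n) + x * (pc r n * ((n : ℝ) * x ^ (n - 1)))) := by
              rw [tsum_congr hterm]; simp
        _ = (∑' n : ℕ, r * (pc r n * x ^ n))
            + ∑' n : ℕ, x * (pc r n * ((n : ℝ) * x ^ (n - 1))) :=
              Summable.tsum_add (S1.mul_left r) (Sd.mul_left x)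
        _ = r * F x + x * D x := by rw [tsum_mul_left, tsum_mul_left]
    linear_combination hDx
  set G : ℝ → ℝ := fun x => (1 - x) ^ r * F x with hG
  have hGderiv : ∀ x ∈ Set.Ioo (-1:ℝ) 1, HasDerivAt G 0 x := by
    intro x hx
    have hx1 : |x| < 1 := abs_lt.2 ⟨hx.1, hx.2⟩
    have h1x : (0:ℝ) < 1 - x := by linarith [hx.2]
    have hFd : HasDerivAt F (D x) x := hasDerivAt_F hr hx1
    have hsub : HasDerivAt (fun y : ℝ => 1 - y) (-1) x := by
      simpa using (hasDerivAt_id x).const_sub 1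
    have hpow := hsub.rpow_const (p := r) (Or.inl h1x.ne')
    have hmul := hpow.mul hFd
    refine hmul.congr_deriv ?_
    symm
    have hrw : (1 - x : ℝ) ^ r = (1 - x) ^ (r - 1) * (1 - x) := by
      rw [← Real.rpow_add_one h1x.ne' (r - 1)]
      norm_num
    have hode := hODE x hx1
    rw [hrw]
    linear_combination (-(1 - x) ^ (r - 1)) * hode
  have h0mem : (0:ℝ) ∈ Set.Ioo (-1:ℝ) 1 := by norm_num
  have hsmem : s ∈ Set.Ioo (-1:ℝ) 1 := abs_lt.1 hs
  have hGs : G s = G 0 := by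
    apply (convex_Ioo (-1:ℝ) 1).is_const_of_fderivWithin_eq_zero
      (fun x hx => (hGderiv x hx).differentiableAt.differentiableWithinAt)
      ?_ hsmem h0mem
    intro x hx
    rw [fderivWithin_of_isOpen isOpen_Ioo hx, (hGderiv x hx).hasFDerivAt.fderiv]
    ext
    simp
  have hF0 : F 0 = 1 := by
    have he : F 0 = ∑' n : ℕ, pc r n * (0:ℝ) ^ n := rfl
    rw [he, tsum_eq_single 0 (fun n hn => by simp [zero_pow hn])]
    simp [pc_zero]
  have hG0 : G 0 = 1 := by
    rw [hG]
    simp only [sub_zero, Real.one_rpow, one_mul]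
    exact hF0
  have h1s : (0:ℝ) < 1 - s := by
    have := (abs_lt.1 hs).2
    linarith
  have hkey : (1 - s) ^ r * F s = 1 := hGs.trans hG0
  rw [Real.rpow_neg h1s.le]
  exact (inv_eq_of_mul_eq_one_right hkey).symm

lemma asc43 (n : ℕ) :
    (ascPochhammer ℝ n).eval (4/3) = (ascPochhammer ℝ n).eval (1/3) * (3 * n + 1) := by
  induction n with
  | zero => simp
  | succ n ih =>
      rw [ascPochhammer_succ_eval, ascPochhammer_succ_eval, ih]
      push_cast
      ring

lemma asc53 (n : ℕ) :
    (ascPochhammer ℝ n).eval (2/3) * (3 * n + 2) = 2 * (ascPochhammer ℝ n).eval (5/3) := by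
  induction n with
  | zero => simp
  | succ n ih =>
      rw [ascPochhammer_succ_eval, ascPochhammer_succ_eval]
      push_cast
      linear_combination ((5:ℝ)/3 + n) * ih

lemma coeff_key (n : ℕ) :
    (ascPochhammer ℝ n).eval (2/3) * (ascPochhammer ℝ n).eval (4/3) /
        ((ascPochhammer ℝ n).eval (5/3) * (n ! : ℝ))
      + (ascPochhammer ℝ n).eval (2/3) * (ascPochhammer ℝ n).eval (1/3) /
        ((ascPochhammer ℝ n).eval (5/3) * (n ! : ℝ))
      = 2 * pc (1/3) n := by
  have h53 : (0:ℝ) < (ascPochhammer ℝ n).eval (5/3) := ascPochhammer_pos n _ (by norm_num)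
  have hf : ((n ! : ℕ) : ℝ) ≠ 0 := by exact_mod_cast n.factorial_ne_zero
  have hnum : (ascPochhammer ℝ n).eval (2/3) * (ascPochhammer ℝ n).eval (4/3)
      + (ascPochhammer ℝ n).eval (2/3) * (ascPochhammer ℝ n).eval (1/3)
      = 2 * (ascPochhammer ℝ n).eval (1/3) * (ascPochhammer ℝ n).eval (5/3) := by
    rw [asc43]
    linear_combination (ascPochhammer ℝ n).eval (1/3) * asc53 n
  unfold pc
  field_simp
  linear_combination hnum

/-- The Gauss hypergeometric function ₂F₁(a,b;c;s) defined by its series (real). -/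
noncomputable def hyp2F1 (a b c s : ℝ) : ℝ :=
  ∑' n : ℕ, (ascPochhammer ℝ n).eval a * (ascPochhammer ℝ n).eval b /
      ((ascPochhammer ℝ n).eval c * (n ! : ℝ)) * s ^ n

/-- ₂F₁(2/3,4/3;5/3;s) = 2(1-s)^{-1/3} - ₂F₁(2/3,1/3;5/3;s) for |s| < 1. -/
theorem hyp2F1_identity (s : ℝ) (hs : |s| < 1) :
    hyp2F1 (2/3) (4/3) (5/3) s
      = 2 * (1 - s) ^ (-(1/3 : ℝ)) - hyp2F1 (2/3) (1/3) (5/3) s := by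
  have h13 : (0:ℝ) < 1/3 := by norm_num
  set cA : ℕ → ℝ := fun n => (ascPochhammer ℝ n).eval (2/3) * (ascPochhammer ℝ n).eval (4/3) /
      ((ascPochhammer ℝ n).eval (5/3) * (n ! : ℝ)) with hcA
  set cB : ℕ → ℝ := fun n => (ascPochhammer ℝ n).eval (2/3) * (ascPochhammer ℝ n).eval (1/3) /
      ((ascPochhammer ℝ n).eval (5/3) * (n ! : ℝ)) with hcB
  have hApos : ∀ n, 0 ≤ cA n := by
    intro n
    have h1 := ascPochhammer_pos n (2/3 : ℝ) (by norm_num)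
    have h2 := ascPochhammer_pos n (4/3 : ℝ) (by norm_num)
    have h3 := ascPochhammer_pos n (5/3 : ℝ) (by norm_num)
    have h4 : (0:ℝ) < (n ! : ℝ) := by exact_mod_cast n.factorial_pos
    rw [hcA]
    positivity
  have hBpos : ∀ n, 0 ≤ cB n := by
    intro n
    have h1 := ascPochhammer_pos n (2/3 : ℝ) (by norm_num)
    have h2 := ascPochhammer_pos n (1/3 : ℝ) (by norm_num)
    have h3 := ascPochhammer_pos n (5/3 : ℝ) (by norm_num)
    have h4 : (0:ℝ) < (n ! : ℝ) := by exact_mod_cast n.factorial_pos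
    rw [hcB]
    positivity
  have hkey : ∀ n, cA n + cB n = 2 * pc (1/3) n := fun n => coeff_key n
  have habs : |(|s|)| < 1 := by rwa [abs_abs]
  have hSpc : Summable (fun n => 2 * (pc (1/3) n * |s| ^ n)) :=
    (summable_pc h13 habs).mul_left 2
  have hbound : ∀ (c : ℕ → ℝ), (∀ n, 0 ≤ c n) → (∀ n, c n ≤ 2 * pc (1/3) n) →
      Summable (fun n => c n * s ^ n) := by
    intro c hc hle
    apply Summable.of_norm_bounded hSpc
    intro n
    rw [norm_mul, norm_pow, Real.norm_eq_abs, Real.norm_eq_abs, abs_of_nonneg (hc n)]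
    have : (0:ℝ) ≤ |s| ^ n := by positivity
    calc c n * |s| ^ n ≤ 2 * pc (1/3) n * |s| ^ n := mul_le_mul_of_nonneg_right (hle n) this
      _ = 2 * (pc (1/3) n * |s| ^ n) := by ring
  have hSA : Summable (fun n => cA n * s ^ n) := by
    apply hbound cA hApos
    intro n
    have := hkey n
    have := hBpos n
    linarith
  have hSB : Summable (fun n => cB n * s ^ n) := by
    apply hbound cB hBpos
    intro n
    have := hkey n
    have := hApos n
    linarith
  have hbin : (∑' n : ℕ, pc (1/3) n * s ^ n) = (1 - s) ^ (-(1/3:ℝ)) := binom_series h13 hs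
  have hsum : (∑' n, cA n * s ^ n) + (∑' n, cB n * s ^ n) = 2 * (1 - s) ^ (-(1/3:ℝ)) := by
    rw [← Summable.tsum_add hSA hSB]
    calc (∑' n, (cA n * s ^ n + cB n * s ^ n))
        = ∑' n, 2 * (pc (1/3) n * s ^ n) := by
          apply tsum_congr
          intro n
          rw [← add_mul, hkey n]
          ring
      _ = 2 * ∑' n, pc (1/3) n * s ^ n := tsum_mul_left
      _ = 2 * (1 - s) ^ (-(1/3:ℝ)) := by rw [hbin]
  show (∑' n, cA n * s ^ n) = 2 * (1 - s) ^ (-(1/3:ℝ)) - (∑' n, cB n * s ^ n)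
  linarith [hsum]
end

section
/- Gauss's summation formula: if a,b,c are real with c > a + b and c not a nonpositive integer, then the series Σ_{n≥0} (a)_n (b)_n / ((c)_n n!) converges and equals Γ(c)Γ(c-a-b)/(Γ(c-a)Γ(c-b)). -/
open scoped Nat
open Filter Finset Topology

namespace GaussAux

noncomputable def T (a b c : ℝ) (n : ℕ) : ℝ :=
  (ascPochhammer ℝ n).eval a * (ascPochhammer ℝ n).eval b /
    ((ascPochhammer ℝ n).eval c * (n ! : ℝ))

lemma T_zero (a b c : ℝ) : T a b c 0 = 1 := by
  simp [T]

lemma T_succ (a b c : ℝ) (n : ℕ) :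
    T a b c (n + 1) = T a b c n * ((a + n) * (b + n) / ((c + n) * ((n : ℝ) + 1))) := by
  simp only [T, ascPochhammer_succ_eval, Nat.factorial_succ, Nat.cast_mul, Nat.cast_add,
    Nat.cast_one]
  rw [div_mul_div_comm]
  congr 1 <;> ring

lemma abs_T_succ (a b c : ℝ) (n : ℕ) :
    |T a b c (n + 1)| = |T a b c n| * (|a + n| * |b + n| / (|c + n| * ((n : ℝ) + 1))) := by
  rw [T_succ, abs_mul, abs_div, abs_mul, abs_mul]
  have : |(n : ℝ) + 1| = (n : ℝ) + 1 := abs_of_pos (by positivity)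
  rw [this]

lemma poch_pos {x : ℝ} (hx : 0 < x) (n : ℕ) : 0 < (ascPochhammer ℝ n).eval x := by
  induction n with
  | zero => simp
  | succ n ih => rw [ascPochhammer_succ_eval]; positivity

lemma poch_ne_zero {x : ℝ} (hx : ∀ k : ℕ, x ≠ -(k : ℝ)) (n : ℕ) :
    (ascPochhammer ℝ n).eval x ≠ 0 := by
  induction n with
  | zero => simp
  | succ n ih =>
    rw [ascPochhammer_succ_eval]
    refine mul_ne_zero ih ?_
    intro h
    exact hx n (by linarith)

/-- Key decay bound. -/
lemma key (a b c : ℝ) (h : a + b < c) :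
    ∃ N : ℕ, 1 ≤ N ∧ ∃ C : ℝ, 0 ≤ C ∧
      ∀ n, N ≤ n → |T a b c n| ≤ C * (n : ℝ) ^ (-(1 + (c - a - b) / 2)) := by
  set d : ℝ := (c - a - b) / 2 with hd
  have hd0 : 0 < d := by simp only [hd]; linarith
  set p : ℝ := 1 + d with hp
  have hp1 : 1 ≤ p := by simp only [hp]; linarith
  obtain ⟨N, hN⟩ := exists_nat_ge (max (|a| + |b| + |c| + 1) ((|a * b| + |c| * d) / d) + 1)
  have hN1 : 1 ≤ N := by
    by_contra hcon
    push_neg at hcon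
    interval_cases N
    · simp only [Nat.cast_zero] at hN
      have h1 : (0:ℝ) ≤ |a| + |b| + |c| := by positivity
      have h2 : max (|a| + |b| + |c| + 1) ((|a * b| + |c| * d) / d) ≥ |a| + |b| + |c| + 1 :=
        le_max_left _ _
      linarith
  have hNa : |a| + |b| + |c| + 1 ≤ (N : ℝ) := by
    have := le_max_left (|a| + |b| + |c| + 1) ((|a * b| + |c| * d) / d)
    linarith
  have hNb : (|a * b| + |c| * d) / d ≤ (N : ℝ) := by
    have := le_max_right (|a| + |b| + |c| + 1) ((|a * b| + |c| * d) / d)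
    linarith
  -- main step inequality
  have step : ∀ n : ℕ, N ≤ n →
      |T a b c (n + 1)| ≤ |T a b c n| * (((n : ℝ) / ((n : ℝ) + 1)) ^ p) := by
    intro n hn
    have hnN : (N : ℝ) ≤ (n : ℝ) := by exact_mod_cast hn
    have hna : 0 < a + n := by
      have : -|a| ≤ a := neg_abs_le a
      have h2 : (0:ℝ) ≤ |b| + |c| := by positivity
      linarith
    have hnb : 0 < b + n := by
      have : -|b| ≤ b := neg_abs_le b
      have h2 : (0:ℝ) ≤ |a| + |c| := by positivity
      linarith
    have hnc : 0 < c + n := by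
      have : -|c| ≤ c := neg_abs_le c
      have h2 : (0:ℝ) ≤ |a| + |b| := by positivity
      linarith
    rw [abs_T_succ, abs_of_pos hna, abs_of_pos hnb, abs_of_pos hnc]
    refine mul_le_mul_of_nonneg_left ?_ (abs_nonneg _)
    -- (a+n)(b+n)/((c+n)(n+1)) ≤ (n/(n+1))^p
    have hn1 : (0:ℝ) < (n : ℝ) + 1 := by positivity
    have hbern : 1 - p / ((n : ℝ) + 1) ≤ ((n : ℝ) / ((n : ℝ) + 1)) ^ p := by
      have hs : (-1 : ℝ) ≤ -(1 / ((n : ℝ) + 1)) := by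
        rw [neg_le_neg_iff]
        rw [div_le_one hn1]
        linarith
      have := one_add_mul_self_le_rpow_one_add hs hp1
      have heq : 1 + -(1 / ((n : ℝ) + 1)) = (n : ℝ) / ((n : ℝ) + 1) := by
        field_simp
        ring
      rw [heq] at this
      calc 1 - p / ((n : ℝ) + 1) = 1 + p * -(1 / ((n : ℝ) + 1)) := by ring
        _ ≤ _ := this
    refine le_trans ?_ hbern
    rw [div_le_iff₀ (by positivity)]
    have hkey : a * b + c * d ≤ d * (n : ℝ) := by
      have h1 : (|a * b| + |c| * d) ≤ d * (N:ℝ) := by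
        rw [div_le_iff₀ hd0] at hNb
        linarith [hNb]
      have h2 : a * b ≤ |a * b| := le_abs_self _
      have h3 : c * d ≤ |c| * d := by
        have := le_abs_self c
        nlinarith [hd0.le]
      nlinarith [hd0.le]
    have hexp : (1 - p / ((n:ℝ) + 1)) * ((c + n) * ((n:ℝ) + 1)) = (c + n) * ((n:ℝ) - d) := by
      field_simp
      ring
    rw [hexp]
    nlinarith [hnc, hkey]
  -- antitone of g n = |T n| * n^p
  have anti : ∀ n : ℕ, N ≤ n → |T a b c n| * (n : ℝ) ^ p ≤ |T a b c N| * (N : ℝ) ^ p := by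
    intro n hn
    induction n, hn using Nat.le_induction with
    | base => exact le_refl _
    | succ n hn ih =>
      refine le_trans ?_ ih
      have hn0 : (0:ℝ) < (n:ℝ) := by
        have : (1:ℕ) ≤ n := le_trans hN1 hn
        exact_mod_cast this
      have hn1 : (0:ℝ) < (n:ℝ) + 1 := by positivity
      have h1 := step n hn
      have h2 : |T a b c (n+1)| * ((n:ℝ)+1) ^ p ≤
          (|T a b c n| * (((n:ℝ)/((n:ℝ)+1)) ^ p)) * ((n:ℝ)+1) ^ p :=
        mul_le_mul_of_nonneg_right h1 (Real.rpow_nonneg hn1.le p)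
      have h3 : (|T a b c n| * (((n:ℝ)/((n:ℝ)+1)) ^ p)) * ((n:ℝ)+1) ^ p
          = |T a b c n| * (n:ℝ) ^ p := by
        rw [Real.div_rpow hn0.le hn1.le, mul_assoc,
          div_mul_cancel₀ _ (ne_of_gt (Real.rpow_pos_of_pos hn1 p))]
      have hc : ((n+1 : ℕ):ℝ) = (n:ℝ)+1 := by push_cast; ring
      rw [hc]
      linarith [h2, h3.le, h3.ge]
  refine ⟨N, hN1, |T a b c N| * (N : ℝ) ^ p, by positivity, ?_⟩
  intro n hn
  have hn0 : (0:ℝ) < (n:ℝ) := by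
    have : (1:ℕ) ≤ n := le_trans hN1 hn
    exact_mod_cast this
  have := anti n hn
  have hrw : |T a b c n| = |T a b c n| * (n:ℝ) ^ p * (n:ℝ) ^ (-p) := by
    rw [mul_assoc, ← Real.rpow_add hn0, add_neg_cancel, Real.rpow_zero, mul_one]
  rw [hrw]
  exact mul_le_mul_of_nonneg_right this (Real.rpow_nonneg hn0.le _)

lemma summable_T (a b c : ℝ) (h : a + b < c) : Summable (T a b c) := by
  obtain ⟨N, hN1, C, hC, hb⟩ := key a b c h
  refine Summable.of_norm_bounded_eventually_nat
    (g := fun n => C * (n : ℝ) ^ (-(1 + (c - a - b) / 2))) ?_ ?_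
  · exact (Real.summable_nat_rpow.2 (by linarith)).mul_left C
  · filter_upwards [eventually_ge_atTop N] with n hn
    exact hb n hn

lemma tendsto_nmulT (a b c : ℝ) (h : a + b < c) :
    Tendsto (fun n : ℕ => (n : ℝ) * |T a b c n|) atTop (𝓝 0) := by
  obtain ⟨N, hN1, C, hC, hb⟩ := key a b c h
  have hd0 : 0 < (c - a - b) / 2 := by linarith
  apply squeeze_zero' (g := fun n : ℕ => C * (n : ℝ) ^ (-((c - a - b) / 2)))
  · filter_upwards with n; positivity
  · filter_upwards [eventually_ge_atTop (max N 1)] with n hn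
    have hnN : N ≤ n := le_trans (le_max_left _ _) hn
    have hn0 : (0:ℝ) < (n:ℝ) := by
      have : (1:ℕ) ≤ n := le_trans (le_max_right _ _) hn
      exact_mod_cast this
    have h1 := hb n hnN
    calc (n:ℝ) * |T a b c n| ≤ (n:ℝ) * (C * (n : ℝ) ^ (-(1 + (c - a - b) / 2))) :=
          mul_le_mul_of_nonneg_left h1 hn0.le
      _ = C * (n : ℝ) ^ (-((c - a - b) / 2)) := by
          rw [show -((c - a - b) / 2) = 1 + -(1 + (c - a - b) / 2) by ring,
            Real.rpow_add hn0, Real.rpow_one]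
          ring
  · rw [← mul_zero C]
    exact (tendsto_rpow_neg_atTop hd0).comp tendsto_natCast_atTop_atTop |>.const_mul C

lemma poch_shift (c : ℝ) (hc0 : c ≠ 0) (n : ℕ) :
    (ascPochhammer ℝ n).eval (c + 1) = (ascPochhammer ℝ n).eval c * (c + n) / c := by
  have h1 : (ascPochhammer ℝ (n+1)).eval c = c * (ascPochhammer ℝ n).eval (c + 1) := by
    rw [ascPochhammer_succ_left]
    simp [Polynomial.eval_comp]
  have h2 : (ascPochhammer ℝ (n+1)).eval c = (ascPochhammer ℝ n).eval c * (c + n) :=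
    ascPochhammer_succ_eval n c
  field_simp
  linear_combination h2 - h1

lemma termwise (a b c : ℝ) (hc : ∀ k : ℕ, c ≠ -(k : ℝ)) (n : ℕ) :
    (c - a - b) * T a b c n - ((c - a) * (c - b) / c) * T a b (c + 1) n
      = (n : ℝ) * T a b c n - ((n : ℝ) + 1) * T a b c (n + 1) := by
  have hc0 : c ≠ 0 := by simpa using hc 0
  have hcn : c + (n : ℝ) ≠ 0 := by
    intro hh; exact hc n (by linarith)
  have hC : (ascPochhammer ℝ n).eval c ≠ 0 := poch_ne_zero hc n
  have hfac : ((n ! : ℕ) : ℝ) ≠ 0 := by positivity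
  have hshift : T a b (c + 1) n = T a b c n * (c / (c + n)) := by
    unfold T
    rw [poch_shift c hc0 n]
    field_simp
  rw [hshift, T_succ]
  field_simp
  ring

lemma contiguous (a b c : ℝ) (h : a + b < c) (hc : ∀ k : ℕ, c ≠ -(k : ℝ)) :
    ∑' n, T a b c n = ((c - a) * (c - b) / (c * (c - a - b))) * ∑' n, T a b (c + 1) n := by
  have hc0 : c ≠ 0 := by simpa using hc 0
  have hcab : c - a - b ≠ 0 := by intro hh; linarith [h]
  have hS1 : Summable (T a b c) := summable_T a b c h
  have hS2 : Summable (T a b (c + 1)) := summable_T a b (c + 1) (by linarith)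
  -- partial sums
  have hpart : ∀ N : ℕ, ∑ n ∈ range N,
      ((c - a - b) * T a b c n - ((c - a) * (c - b) / c) * T a b (c + 1) n)
      = -((N : ℝ) * T a b c N) := by
    intro N
    have := Finset.sum_range_sub' (fun k => (k : ℝ) * T a b c k) N
    rw [Finset.sum_congr rfl (fun n _ => termwise a b c hc n)]
    push_cast at this
    rw [this]
    simp
  have h1 : Tendsto (fun N : ℕ => ∑ n ∈ range N,
      ((c - a - b) * T a b c n - ((c - a) * (c - b) / c) * T a b (c + 1) n)) atTop
      (𝓝 ((c - a - b) * ∑' n, T a b c n - ((c - a) * (c - b) / c) * ∑' n, T a b (c + 1) n)) :=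
    (((hS1.hasSum.mul_left _).sub (hS2.hasSum.mul_left _)).tendsto_sum_nat)
  have h2 : Tendsto (fun N : ℕ => -((N : ℝ) * T a b c N)) atTop (𝓝 0) := by
    rw [show (0:ℝ) = -0 by norm_num]
    apply Tendsto.neg
    apply squeeze_zero_norm (a := fun n : ℕ => (n : ℝ) * |T a b c n|) ?_
      (tendsto_nmulT a b c h)
    intro n
    rw [Real.norm_eq_abs, abs_mul, Nat.abs_cast]
  have h3 : (c - a - b) * ∑' n, T a b c n
      - ((c - a) * (c - b) / c) * ∑' n, T a b (c + 1) n = 0 :=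
    tendsto_nhds_unique (h1.congr (fun N => (hpart N))) h2
  field_simp at h3 ⊢
  linear_combination h3

lemma iterate (a b c : ℝ) (h : a + b < c) (hc : ∀ k : ℕ, c ≠ -(k : ℝ)) (m : ℕ) :
    ∑' n, T a b c n =
      (∏ k ∈ range m, ((c + k - a) * (c + k - b) / ((c + k) * (c + k - a - b)))) *
        ∑' n, T a b (c + m) n := by
  induction m with
  | zero => simp
  | succ m ih =>
    rw [ih, prod_range_succ]
    have hm0 : (0:ℝ) ≤ (m:ℝ) := Nat.cast_nonneg m
    have h' : a + b < c + m := by linarith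
    have hc' : ∀ k : ℕ, c + (m : ℝ) ≠ -(k : ℝ) := by
      intro k hh
      exact hc (m + k) (by push_cast; linarith)
    have hcon := contiguous a b (c + m) h' hc'
    rw [show c + ((m:ℕ):ℝ) + 1 = c + (((m+1) : ℕ):ℝ) by push_cast; ring] at hcon
    rw [hcon]
    push_cast
    ring

lemma prod_limit (a b c : ℝ) (h : a + b < c) (hc : ∀ k : ℕ, c ≠ -(k : ℝ))
    (hca : ∀ k : ℕ, c - a ≠ -(k : ℝ)) (hcb : ∀ k : ℕ, c - b ≠ -(k : ℝ)) :
    Tendsto (fun m : ℕ => ∏ k ∈ range m,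
        ((c + k - a) * (c + k - b) / ((c + k) * (c + k - a - b)))) atTop
      (𝓝 (Real.Gamma c * Real.Gamma (c - a - b) / (Real.Gamma (c - a) * Real.Gamma (c - b)))) := by
  have hcab : ∀ k : ℕ, c - a - b ≠ -(k : ℝ) := by
    intro k hh
    have : (0:ℝ) ≤ (k:ℝ) := Nat.cast_nonneg k
    have : c - a - b > 0 := by linarith
    rw [hh] at this
    linarith
  rw [← Filter.tendsto_add_atTop_iff_nat 1]
  have heq : ∀ᶠ n : ℕ in atTop,
      Real.GammaSeq c n * Real.GammaSeq (c - a - b) n /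
        (Real.GammaSeq (c - a) n * Real.GammaSeq (c - b) n)
      = ∏ k ∈ range (n + 1), ((c + k - a) * (c + k - b) / ((c + k) * (c + k - a - b))) := by
    filter_upwards [eventually_ge_atTop 1] with n hn
    have hn0 : (0:ℝ) < (n:ℝ) := by exact_mod_cast hn
    have hQ : ∀ s : ℝ, (∀ k : ℕ, s ≠ -(k : ℝ)) → ∏ j ∈ range (n + 1), (s + j) ≠ 0 := by
      intro s hs
      refine Finset.prod_ne_zero_iff.2 fun j _ => ?_
      intro hh
      exact hs j (by linarith)
    have hQc := hQ c hc
    have hQca := hQ (c - a) hca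
    have hQcb := hQ (c - b) hcb
    have hQcab := hQ (c - a - b) hcab
    have hfac : ((n ! : ℕ) : ℝ) ≠ 0 := by positivity
    have hprod : ∏ k ∈ range (n + 1), ((c + k - a) * (c + k - b) / ((c + k) * (c + k - a - b)))
        = (∏ j ∈ range (n + 1), (c - a + j)) * (∏ j ∈ range (n + 1), (c - b + j)) /
          ((∏ j ∈ range (n + 1), (c + j)) * (∏ j ∈ range (n + 1), (c - a - b + j))) := by
      rw [← Finset.prod_mul_distrib, ← Finset.prod_mul_distrib, ← Finset.prod_div_distrib]
      exact Finset.prod_congr rfl fun k _ => by ring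
    rw [hprod]
    have hpow : (n:ℝ) ^ c * (n:ℝ) ^ (c - a - b) = (n:ℝ) ^ (c - a) * (n:ℝ) ^ (c - b) := by
      rw [← Real.rpow_add hn0, ← Real.rpow_add hn0]
      ring_nf
    have hpowne : ∀ s : ℝ, (n:ℝ) ^ s ≠ 0 := fun s => (Real.rpow_pos_of_pos hn0 s).ne'
    simp only [Real.GammaSeq]
    rw [div_mul_div_comm, div_mul_div_comm, div_div_div_eq]
    have hW : (n:ℝ) ^ c * ↑n ! * ((n:ℝ) ^ (c - a - b) * ↑n !)
        = (n:ℝ) ^ (c - a) * ↑n ! * ((n:ℝ) ^ (c - b) * ↑n !) := by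
      linear_combination ((↑n ! : ℝ) * (↑n ! : ℝ)) * hpow
    rw [hW, mul_comm ((∏ j ∈ range (n + 1), (c + ↑j)) * ∏ j ∈ range (n + 1), (c - a - b + ↑j))
      ((n:ℝ) ^ (c - a) * ↑n ! * ((n:ℝ) ^ (c - b) * ↑n !))]
    exact mul_div_mul_left _ _ (by positivity)
  have hΓ : Real.Gamma (c - a) * Real.Gamma (c - b) ≠ 0 :=
    mul_ne_zero (Real.Gamma_ne_zero fun m => hca m) (Real.Gamma_ne_zero fun m => hcb m)
  exact Tendsto.congr' heq
    (((Real.GammaSeq_tendsto_Gamma c).mul (Real.GammaSeq_tendsto_Gamma (c - a - b))).div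
      ((Real.GammaSeq_tendsto_Gamma (c - a)).mul (Real.GammaSeq_tendsto_Gamma (c - b))) hΓ)

lemma poch_nonneg {x : ℝ} (hx : 0 ≤ x) (n : ℕ) : 0 ≤ (ascPochhammer ℝ n).eval x := by
  induction n with
  | zero => simp
  | succ n ih => rw [ascPochhammer_succ_eval]; positivity

lemma T_nonneg {x y z : ℝ} (hx : 0 ≤ x) (hy : 0 ≤ y) (hz : 0 ≤ z) (n : ℕ) :
    0 ≤ T x y z n := by
  unfold T
  have h1 := poch_nonneg hx n
  have h2 := poch_nonneg hy n
  have h3 := poch_nonneg hz n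
  positivity

lemma tail_to_one (a b c : ℝ) (h : a + b < c) :
    Tendsto (fun m : ℕ => ∑' n, T a b (c + m) n) atTop (𝓝 1) := by
  obtain ⟨m₀, hm₀⟩ := exists_nat_ge (|a| + |b| + |c| + 2)
  have habs := neg_abs_le c
  have ha0 : (0:ℝ) ≤ |a| := abs_nonneg a
  have hb0 : (0:ℝ) ≤ |b| := abs_nonneg b
  set z : ℝ := c + (m₀ : ℝ) with hz
  have hzlb : |a| + |b| + 2 ≤ z := by
    simp only [hz]; linarith
  have hz0 : (0:ℝ) < z := by linarith
  have hS : Summable (T |a| |b| z) := summable_T _ _ _ (by linarith)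
  have hS1 : Summable (fun n => T |a| |b| z (n + 1)) := (summable_nat_add_iff 1).2 hS
  -- pointwise bound
  have bound : ∀ m : ℕ, m₀ ≤ m → ∀ n : ℕ,
      |T a b (c + m) (n + 1)| ≤ (z / (c + m)) * T |a| |b| z (n + 1) := by
    intro m hm
    have hmm : (m₀ : ℝ) ≤ (m : ℝ) := by exact_mod_cast hm
    have hzm : z ≤ c + m := by simp only [hz]; linarith
    have hcm : (0:ℝ) < c + m := lt_of_lt_of_le hz0 hzm
    intro n
    induction n with
    | zero =>
      have e1 : |T a b (c + m) 1| = |a| * |b| / (c + m) := by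
        rw [show (1:ℕ) = 0 + 1 from rfl, abs_T_succ, T_zero]
        push_cast
        rw [abs_one, abs_of_pos (by linarith : (0:ℝ) < c + (m:ℝ) + 0)]
        simp [abs_mul]
      have e2 : T |a| |b| z 1 = |a| * |b| / z := by
        rw [show (1:ℕ) = 0 + 1 from rfl, T_succ, T_zero]
        push_cast
        ring_nf
      rw [e1, e2]
      rw [div_mul_div_comm, div_le_div_iff₀ (by linarith) (by positivity)]
      push_cast
      ring_nf
      rw [mul_comm]
    | succ n ih =>
      have hczn : (0:ℝ) < z + ((n:ℝ) + 1) := by positivity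
      have hccn : z + ((n:ℝ) + 1) ≤ c + m + ((n:ℝ) + 1) := by linarith
      have hcmn : (0:ℝ) < c + m + ((n:ℝ) + 1) := lt_of_lt_of_le hczn hccn
      have hk : (0:ℝ) < (n:ℝ) + 1 + 1 := by positivity
      have hratio : |a + ((n:ℝ) + 1)| * |b + ((n:ℝ) + 1)| / (|c + m + ((n:ℝ) + 1)| * ((n:ℝ) + 1 + 1))
          ≤ (|a| + ((n:ℝ) + 1)) * (|b| + ((n:ℝ) + 1)) / ((z + ((n:ℝ) + 1)) * ((n:ℝ) + 1 + 1)) := by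
        rw [abs_of_pos hcmn]
        apply div_le_div₀ (by positivity) ?_ (by positivity) ?_
        · apply mul_le_mul ?_ ?_ (abs_nonneg _) (by positivity)
          · calc |a + ((n:ℝ) + 1)| ≤ |a| + |((n:ℝ) + 1)| := abs_add_le _ _
              _ = |a| + ((n:ℝ) + 1) := by rw [abs_of_pos (show (0:ℝ) < (n:ℝ) + 1 by positivity)]
          · calc |b + ((n:ℝ) + 1)| ≤ |b| + |((n:ℝ) + 1)| := abs_add_le _ _
              _ = |b| + ((n:ℝ) + 1) := by rw [abs_of_pos (show (0:ℝ) < (n:ℝ) + 1 by positivity)]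
        · exact mul_le_mul_of_nonneg_right hccn hk.le
      calc |T a b (c + m) (n + 1 + 1)|
          = |T a b (c + m) (n + 1)| *
            (|a + ((n:ℝ) + 1)| * |b + ((n:ℝ) + 1)| / (|c + m + ((n:ℝ) + 1)| * ((n:ℝ) + 1 + 1))) := by
            rw [abs_T_succ]; push_cast; ring_nf
        _ ≤ ((z / (c + m)) * T |a| |b| z (n + 1)) *
            ((|a| + ((n:ℝ) + 1)) * (|b| + ((n:ℝ) + 1)) / ((z + ((n:ℝ) + 1)) * ((n:ℝ) + 1 + 1))) := by
            apply mul_le_mul ih hratio (by positivity) ?_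
            have := T_nonneg ha0 hb0 hz0.le (n + 1)
            positivity
        _ = (z / (c + m)) * T |a| |b| z (n + 1 + 1) := by
            rw [T_succ |a| |b| z (n + 1)]
            push_cast
            ring
  -- main estimate and squeeze
  have hEst : ∀ m : ℕ, m₀ ≤ m →
      |(∑' n, T a b (c + m) n) - 1| ≤ (z * ∑' n, T |a| |b| z (n + 1)) / (c + m) := by
    intro m hm
    have hmm : (m₀ : ℝ) ≤ (m : ℝ) := by exact_mod_cast hm
    have hzm : z ≤ c + m := by simp only [hz]; linarith
    have hcm : (0:ℝ) < c + m := lt_of_lt_of_le hz0 hzm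
    have hsm : Summable (T a b (c + m)) := summable_T a b _ (by linarith)
    have hsm1 : Summable (fun n => T a b (c + m) (n + 1)) := (summable_nat_add_iff 1).2 hsm
    have h0 : (∑' n, T a b (c + m) n) = 1 + ∑' n, T a b (c + m) (n + 1) := by
      rw [Summable.tsum_eq_zero_add hsm, T_zero]
    rw [h0]
    rw [add_sub_cancel_left]
    calc |∑' n, T a b (c + m) (n + 1)| ≤ ∑' n, |T a b (c + m) (n + 1)| := by
          simpa using norm_tsum_le_tsum_norm (f := fun n => T a b (c + m) (n + 1)) (hsm1.abs)
      _ ≤ ∑' n, (z / (c + m)) * T |a| |b| z (n + 1) :=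
          Summable.tsum_le_tsum (bound m hm) hsm1.abs (hS1.mul_left _)
      _ = (z * ∑' n, T |a| |b| z (n + 1)) / (c + m) := by
          rw [tsum_mul_left]
          ring
  have hlim : Tendsto (fun m : ℕ => (z * ∑' n, T |a| |b| z (n + 1)) / (c + m)) atTop (𝓝 0) := by
    apply Tendsto.div_atTop tendsto_const_nhds
    apply tendsto_atTop_add_const_left
    exact tendsto_natCast_atTop_atTop
  have hdiff : Tendsto (fun m : ℕ => (∑' n, T a b (c + m) n) - 1) atTop (𝓝 0) := by
    apply squeeze_zero_norm' ?_ hlim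
    filter_upwards [eventually_ge_atTop m₀] with m hm
    exact hEst m hm
  have := hdiff.add_const 1
  simpa using this

end GaussAux

open GaussAux Filter Topology in
/-- Gauss's summation formula: ₂F₁(a,b;c;1) = Γ(c)Γ(c-a-b)/(Γ(c-a)Γ(c-b)). -/
theorem gauss_summation (a b c : ℝ) (hcab : a + b < c)
    (hc : ∀ k : ℕ, c ≠ -(k : ℝ))
    (hca : ∀ k : ℕ, c - a ≠ -(k : ℝ)) (hcb : ∀ k : ℕ, c - b ≠ -(k : ℝ)) :
    Summable (fun n : ℕ => (ascPochhammer ℝ n).eval a * (ascPochhammer ℝ n).eval b /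
        ((ascPochhammer ℝ n).eval c * (n ! : ℝ))) ∧
    (∑' n : ℕ, (ascPochhammer ℝ n).eval a * (ascPochhammer ℝ n).eval b /
        ((ascPochhammer ℝ n).eval c * (n ! : ℝ)))
      = Real.Gamma c * Real.Gamma (c - a - b) /
          (Real.Gamma (c - a) * Real.Gamma (c - b)) := by
  have hsum : Summable (T a b c) := summable_T a b c hcab
  refine ⟨hsum, ?_⟩
  have h1 := prod_limit a b c hcab hc hca hcb
  have h2 := tail_to_one a b c hcab
  have h3 := h1.mul h2
  have h4 : ∀ m : ℕ, (∏ k ∈ Finset.range m,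
      ((c + k - a) * (c + k - b) / ((c + k) * (c + k - a - b)))) * ∑' n, T a b (c + m) n
      = ∑' n, T a b c n := fun m => (iterate a b c hcab hc m).symm
  have h5 : Tendsto (fun _ : ℕ => ∑' n, T a b c n) atTop
      (𝓝 (Real.Gamma c * Real.Gamma (c - a - b) /
        (Real.Gamma (c - a) * Real.Gamma (c - b)) * 1)) := h3.congr h4
  have h6 := tendsto_nhds_unique h5 tendsto_const_nhds
  rw [mul_one] at h6
  exact h6.symm
end

section
/- The general solution on (0,1) of the ODE 2(1 - 6s² + 4s³) f'(s) + 3s(-1 + 2s - 2s² + s³) f''(s) = 0 is f(s) = C₂ + C₁ g(s), where g(s) = s^{2/3} · [1 - 3s + 2s² - (1-s)^{1/3}(1 - s + s²)·₂F₁(2/3,1/3;5/3;s)] / (3(s-1)^{1/3}(1 - s + s²)). Concretely: every twice continuously differentiable f on (0,1) satisfying the ODE is of this form for some constants C₁, C₂. -/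
open scoped Nat

/-- The nontrivial solution of the ODE; here `(s-1)^{1/3}` is the real cube
root of `s - 1 < 0`, written as `-(1-s)^{1/3}`. -/
noncomputable def wattsODEsol (s : ℝ) : ℝ :=
  s ^ (2/3 : ℝ) *
    (1 - 3*s + 2*s^2 - (1 - s) ^ ((1:ℝ)/3) * (1 - s + s^2) * hyp2F1 (2/3) (1/3) (5/3) s)
    / (3 * (-((1 - s) ^ ((1:ℝ)/3))) * (1 - s + s^2))

namespace Watts

noncomputable def pe (x : ℝ) (n : ℕ) : ℝ := (ascPochhammer ℝ n).eval x

lemma pe_zero (x : ℝ) : pe x 0 = 1 := by simp [pe]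

lemma pe_succ (x : ℝ) (n : ℕ) : pe x (n+1) = pe x n * (x + n) := by
  simp [pe, ascPochhammer_succ_eval]

lemma pe_pos {x : ℝ} (hx : 0 < x) (n : ℕ) : 0 < pe x n := by
  induction n with
  | zero => simp [pe_zero]
  | succ n ih => rw [pe_succ]; positivity

lemma pe_mono {x y : ℝ} (hx : 0 < x) (hxy : x ≤ y) (n : ℕ) : pe x n ≤ pe y n := by
  induction n with
  | zero => simp [pe_zero]
  | succ n ih =>
      rw [pe_succ, pe_succ]
      have := pe_pos hx n
      have := pe_pos (lt_of_lt_of_le hx hxy) n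
      nlinarith

lemma pe_one (n : ℕ) : pe 1 n = (n ! : ℝ) := by simp [pe]

/-- the 2F1(2/3,1/3;5/3) coefficient -/
noncomputable def ca (n : ℕ) : ℝ := pe (2/3) n * pe (1/3) n / (pe (5/3) n * (n ! : ℝ))

/-- the binomial (1-s)^(-1/3) coefficient -/
noncomputable def cb (n : ℕ) : ℝ := pe (1/3) n / (n ! : ℝ)

lemma ca_nonneg (n : ℕ) : 0 ≤ ca n := by
  have h1 := pe_pos (by norm_num : (0:ℝ) < 2/3) n
  have h2 := pe_pos (by norm_num : (0:ℝ) < 1/3) n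
  have h3 := pe_pos (by norm_num : (0:ℝ) < 5/3) n
  have h4 : (0:ℝ) < n ! := by positivity
  exact div_nonneg (mul_nonneg h1.le h2.le) (mul_nonneg h3.le h4.le)

lemma ca_le_one (n : ℕ) : ca n ≤ 1 := by
  have h2 := pe_pos (by norm_num : (0:ℝ) < 1/3) n
  have h3 := pe_pos (by norm_num : (0:ℝ) < 5/3) n
  have h4 : (0:ℝ) < n ! := by positivity
  have m1 : pe (2/3) n ≤ pe (5/3) n := pe_mono (by norm_num) (by norm_num) n
  have m2 : pe (1/3) n ≤ (n ! : ℝ) := by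
    have := pe_mono (by norm_num : (0:ℝ) < 1/3) (by norm_num : (1:ℝ)/3 ≤ 1) n
    rwa [pe_one] at this
  rw [ca, div_le_one (by positivity)]
  have h1 := pe_pos (by norm_num : (0:ℝ) < 2/3) n
  nlinarith

lemma cb_nonneg (n : ℕ) : 0 ≤ cb n := by
  have h2 := pe_pos (by norm_num : (0:ℝ) < 1/3) n
  have h4 : (0:ℝ) < n ! := by positivity
  exact div_nonneg h2.le h4.le

lemma cb_le_one (n : ℕ) : cb n ≤ 1 := by
  have h4 : (0:ℝ) < n ! := by positivity
  rw [cb, div_le_one h4]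
  have := pe_mono (by norm_num : (0:ℝ) < 1/3) (by norm_num : (1:ℝ)/3 ≤ 1) n
  rwa [pe_one] at this

/-- key coefficient identity: ca n * (n + 2/3) = 2/3 * cb n -/
lemma ca_rel (n : ℕ) : ca n * ((n : ℝ) + 2/3) = 2/3 * cb n := by
  have key : pe (2/3) n * ((2:ℝ)/3 + n) = 2/3 * pe (5/3) n := by
    have h1 : pe (2/3) (n+1) = pe (2/3) n * (2/3 + n) := pe_succ _ _
    have h2 : pe (2/3) (n+1) = 2/3 * pe (5/3) n := by
      simp only [pe, ascPochhammer_succ_left, Polynomial.eval_mul, Polynomial.eval_X,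
        Polynomial.eval_comp, Polynomial.eval_add, Polynomial.eval_one]
      norm_num
    linarith [h1, h2]
  have h3 := (pe_pos (by norm_num : (0:ℝ) < 5/3) n).ne'
  have h4 : ((n ! : ℝ)) ≠ 0 := by positivity
  rw [ca, cb]
  field_simp
  linear_combination (3 * pe (1/3) n) * key


noncomputable def S (c : ℕ → ℝ) (s : ℝ) : ℝ := ∑' n : ℕ, c n * s ^ n

noncomputable def S' (c : ℕ → ℝ) (s : ℝ) : ℝ := ∑' n : ℕ, c n * ((n : ℝ) * s ^ (n - 1))

lemma summable_S {c : ℕ → ℝ} (hc1 : ∀ n, |c n| ≤ 1) {s : ℝ} (hs : |s| < 1) :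
    Summable (fun n => c n * s ^ n) := by
  apply Summable.of_norm_bounded (summable_geometric_of_lt_one (abs_nonneg s) hs)
  intro n
  rw [norm_mul, norm_pow, Real.norm_eq_abs, Real.norm_eq_abs]
  calc |c n| * |s| ^ n ≤ 1 * |s| ^ n := by
        exact mul_le_mul_of_nonneg_right (hc1 n) (by positivity)
    _ = |s| ^ n := one_mul _

lemma summable_deriv_aux {r : ℝ} (hr0 : 0 < r) (hr1 : r < 1) :
    Summable (fun n : ℕ => (n : ℝ) * r ^ (n - 1)) := by
  have h := summable_pow_mul_geometric_of_norm_lt_one 1 (by rwa [Real.norm_eq_abs, abs_of_pos hr0])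
  have := h.mul_left r⁻¹
  apply this.congr
  intro n
  cases n with
  | zero => simp
  | succ m => 
      have : r ^ m = r⁻¹ * r ^ (m + 1) := by
        rw [pow_succ]; field_simp
      simp only [Nat.add_sub_cancel, pow_one]
      push_cast
      rw [this]; ring

lemma summable_S' {c : ℕ → ℝ} (hc1 : ∀ n, |c n| ≤ 1) {s : ℝ} (hs : |s| < 1) :
    Summable (fun n => c n * ((n : ℝ) * s ^ (n - 1))) := by
  set r : ℝ := (1 + |s|) / 2 with hr
  have hsr : |s| < r := by rw [hr]; linarith
  have hr0 : 0 < r := lt_of_le_of_lt (abs_nonneg s) hsr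
  have hr1 : r < 1 := by rw [hr]; linarith
  apply Summable.of_norm_bounded (summable_deriv_aux hr0 hr1)
  intro n
  rw [Real.norm_eq_abs, abs_mul, abs_mul, abs_pow, Nat.abs_cast]
  calc |c n| * ((n:ℝ) * |s| ^ (n-1)) ≤ 1 * ((n:ℝ) * r ^ (n-1)) := by
        apply mul_le_mul (hc1 n) _ (by positivity) zero_le_one
        exact mul_le_mul_of_nonneg_left (pow_le_pow_left₀ (abs_nonneg s) hsr.le _) (Nat.cast_nonneg n)
    _ = (n:ℝ) * r ^ (n-1) := one_mul _

lemma hasDerivAt_S {c : ℕ → ℝ} (hc1 : ∀ n, |c n| ≤ 1) {s : ℝ} (hs : |s| < 1) :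
    HasDerivAt (S c) (S' c s) s := by
  set r : ℝ := (1 + |s|) / 2 with hr
  have hsr : |s| < r := by rw [hr]; linarith
  have hr0 : 0 < r := lt_of_le_of_lt (abs_nonneg s) hsr
  have hr1 : r < 1 := by rw [hr]; linarith
  apply hasDerivAt_tsum_of_isPreconnected (summable_deriv_aux hr0 hr1)
    (isOpen_Ioo : IsOpen (Set.Ioo (-r) r)) (convex_Ioo _ _).isPreconnected
    (fun n y _ => (hasDerivAt_pow n y).const_mul (c n))
    (fun n y hy => ?_) (show (0:ℝ) ∈ Set.Ioo (-r) r by constructor <;> simp [hr0, hr0.le] <;> linarith)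
    ?_ (show s ∈ Set.Ioo (-r) r from abs_lt.mp hsr |> fun h => ⟨h.1, h.2⟩)
  · apply summable_of_ne_finset_zero (s := {0})
    intro n hn
    have : n ≠ 0 := by simpa using hn
    simp [zero_pow this]
  · rw [Real.norm_eq_abs, abs_mul, abs_mul, abs_pow, Nat.abs_cast]
    have hyr : |y| ≤ r := by
      rw [abs_le]; exact ⟨hy.1.le, hy.2.le⟩
    calc |c n| * ((n:ℝ) * |y| ^ (n-1)) ≤ 1 * ((n:ℝ) * r ^ (n-1)) := by
          apply mul_le_mul (hc1 n) _ (by positivity) zero_le_one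
          exact mul_le_mul_of_nonneg_left (pow_le_pow_left₀ (abs_nonneg y) hyr _) (Nat.cast_nonneg n)
      _ = (n:ℝ) * r ^ (n-1) := one_mul _

lemma const_of_deriv_zero {f : ℝ → ℝ} {s : Set ℝ} (hs : Convex ℝ s) (ho : IsOpen s)
    (h : ∀ x ∈ s, HasDerivAt f 0 x) {x y : ℝ} (hx : x ∈ s) (hy : y ∈ s) : f x = f y := by
  apply hs.is_const_of_fderivWithin_eq_zero
    (fun z hz => ((h z hz).differentiableAt).differentiableWithinAt) _ hx hy
  intro z hz
  rw [fderivWithin_of_isOpen ho hz, ((h z hz).hasFDerivAt).fderiv]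
  exact ContinuousLinearMap.ext fun w => by simp


lemma ca_abs (n : ℕ) : |ca n| ≤ 1 := abs_le.mpr ⟨by linarith [ca_nonneg n], ca_le_one n⟩
lemma cb_abs (n : ℕ) : |cb n| ≤ 1 := abs_le.mpr ⟨by linarith [cb_nonneg n], cb_le_one n⟩

lemma cb_succ (n : ℕ) : cb (n+1) * ((n:ℝ)+1) = cb n * ((n:ℝ) + 1/3) := by
  have hfac : ((n+1)! : ℝ) = (n ! : ℝ) * ((n:ℝ)+1) := by
    push_cast [Nat.factorial_succ]; ring
  have h1 : (0:ℝ) < n ! := by positivity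
  have h2 : (0:ℝ) < (n:ℝ) + 1 := by positivity
  rw [cb, cb, pe_succ, hfac]
  field_simp
  ring

lemma mul_S' {c : ℕ → ℝ} (hc1 : ∀ n, |c n| ≤ 1) {x : ℝ} (hx : |x| < 1) :
    x * S' c x = ∑' n : ℕ, c n * (n:ℝ) * x ^ n := by
  rw [S', ← tsum_mul_left]
  apply tsum_congr
  intro n
  cases n with
  | zero => simp
  | succ m => rw [Nat.add_sub_cancel, pow_succ]; ring

lemma summable_mul_S' {c : ℕ → ℝ} (hc1 : ∀ n, |c n| ≤ 1) {x : ℝ} (hx : |x| < 1) :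
    Summable (fun n : ℕ => c n * (n:ℝ) * x ^ n) := by
  apply ((summable_S' hc1 hx).mul_left x).congr
  intro n
  cases n with
  | zero => simp
  | succ m => rw [Nat.add_sub_cancel, pow_succ]; ring

lemma shift_S' {c : ℕ → ℝ} (hc1 : ∀ n, |c n| ≤ 1) {x : ℝ} (hx : |x| < 1) :
    S' c x = ∑' n : ℕ, c (n+1) * ((n:ℝ)+1) * x ^ n := by
  have hsum := summable_S' hc1 hx
  rw [S', hsum.tsum_eq_zero_add]
  simp only [Nat.cast_zero, zero_mul, mul_zero, zero_add]
  apply tsum_congr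
  intro n
  rw [Nat.add_sub_cancel]
  push_cast
  ring

lemma summable_shift_S' {c : ℕ → ℝ} (hc1 : ∀ n, |c n| ≤ 1) {x : ℝ} (hx : |x| < 1) :
    Summable (fun n : ℕ => c (n+1) * ((n:ℝ)+1) * x ^ n) := by
  have hsum := summable_S' hc1 hx
  apply ((summable_nat_add_iff 1).mpr hsum).congr
  intro n
  rw [Nat.add_sub_cancel]
  push_cast
  ring

/-- the ODE for the binomial series -/
lemma binom_ode {x : ℝ} (hx : |x| < 1) : (1 - x) * S' cb x = (1/3) * S cb x := by
  have h1 : (1 - x) * S' cb x = S' cb x - x * S' cb x := by ring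
  rw [h1, mul_S' cb_abs hx, shift_S' cb_abs hx,
    ← Summable.tsum_sub (summable_shift_S' cb_abs hx) (summable_mul_S' cb_abs hx)]
  rw [S, ← tsum_mul_left]
  apply tsum_congr
  intro n
  linear_combination (x^n) * cb_succ n

lemma S_cb_zero : S cb 0 = 1 := by
  rw [S, tsum_eq_single 0 (fun n hn => by simp [zero_pow hn])]
  simp [cb, pe_zero]

/-- the binomial series identity -/
lemma binom {x : ℝ} (hx : x ∈ Set.Ioo (-1:ℝ) 1) : (1 - x) ^ ((1:ℝ)/3) * S cb x = 1 := by
  have key : ∀ y ∈ Set.Ioo (-1:ℝ) 1,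
      HasDerivAt (fun t => (1 - t) ^ ((1:ℝ)/3) * S cb t) 0 y := by
    intro y hy
    have hy1 : 0 < 1 - y := by linarith [hy.2]
    have hay : |y| < 1 := abs_lt.mpr ⟨hy.1, hy.2⟩
    have hB := hasDerivAt_S cb_abs hay
    have hpow : HasDerivAt (fun t : ℝ => (1 - t) ^ ((1:ℝ)/3))
        ((1/3) * (1 - y) ^ ((1:ℝ)/3 - 1) * (-1)) y := by
      have h1 : HasDerivAt (fun t : ℝ => 1 - t) (-1) y := by
        simpa using (hasDerivAt_id y).const_sub 1
      exact (Real.hasDerivAt_rpow_const (p := (1:ℝ)/3) (Or.inl hy1.ne')).comp y h1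
    have := hpow.mul hB
    refine HasDerivAt.congr_deriv this ?_
    symm
    have hrw : (1 - y) ^ ((1:ℝ)/3 - 1) = (1 - y) ^ ((1:ℝ)/3) / (1 - y) := by
      rw [show (1:ℝ)/3 - 1 = 1/3 + (-1) by ring, Real.rpow_add hy1, Real.rpow_neg_one]
      ring
    rw [hrw]
    have hode := binom_ode hay
    have hS' : S' cb y = (1/3) * S cb y / (1 - y) := by
      field_simp at hode ⊢
      linarith [hode]
    rw [hS']
    field_simp
    ring
  have := const_of_deriv_zero (convex_Ioo _ _) isOpen_Ioo key hx
    (show (0:ℝ) ∈ Set.Ioo (-1:ℝ) 1 by norm_num)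
  simpa [S_cb_zero] using this

/-- the contiguous relation (2/3)F + s F' = (2/3)(1-s)^{-1/3}, in product form -/
lemma F_rel {x : ℝ} (hx : |x| < 1) :
    (2/3) * S ca x + x * S' ca x = (2/3) * S cb x := by
  rw [mul_S' ca_abs hx, S, S, ← tsum_mul_left, ← tsum_mul_left,
    ← Summable.tsum_add ((summable_S ca_abs hx).mul_left (2/3)) (summable_mul_S' ca_abs hx)]
  apply tsum_congr
  intro n
  linear_combination (x^n) * ca_rel n


lemma hasDerivAt_watts {s : ℝ} (hs : s ∈ Set.Ioo (0:ℝ) 1) :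
    HasDerivAt wattsODEsol
      (s ^ ((2:ℝ)/3) * ((1 - s) ^ ((1:ℝ)/3))^2 / (1 - s + s^2)^2) s := by
  obtain ⟨hs0, hs1⟩ := hs
  have h1s : 0 < 1 - s := by linarith
  have habs : |s| < 1 := abs_lt.mpr ⟨by linarith, hs1⟩
  have hD : (0:ℝ) < 1 - s + s^2 := by nlinarith
  have hc : 0 < (1-s) ^ ((1:ℝ)/3) := Real.rpow_pos_of_pos h1s _
  have hdP : HasDerivAt (fun t:ℝ => t ^ ((2:ℝ)/3)) ((2:ℝ)/3 * s ^ ((2:ℝ)/3 - 1)) s :=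
    Real.hasDerivAt_rpow_const (Or.inl hs0.ne')
  have hdm : HasDerivAt (fun t:ℝ => 1 - t) (-1) s := by
    simpa using (hasDerivAt_id s).const_sub 1
  have hdc : HasDerivAt (fun t:ℝ => (1 - t) ^ ((1:ℝ)/3))
      ((1:ℝ)/3 * (1-s) ^ ((1:ℝ)/3 - 1) * -1) s :=
    (Real.hasDerivAt_rpow_const (p := (1:ℝ)/3) (Or.inl h1s.ne')).comp s hdm
  have hdF : HasDerivAt (S ca) (S' ca s) s := hasDerivAt_S ca_abs habs
  have hdq : HasDerivAt (fun t:ℝ => 1 - 3*t + 2*t^2) (-3 + 2*(2*s)) s := by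
    have h1 : HasDerivAt (fun t:ℝ => 1 - 3*t) (-3) s := by
      simpa using ((hasDerivAt_id s).const_mul (3:ℝ)).const_sub 1
    have h2 : HasDerivAt (fun t:ℝ => 2*t^2) (2*(2*s)) s := by
      simpa using (hasDerivAt_pow 2 s).const_mul (2:ℝ)
    exact h1.add h2
  have hdD : HasDerivAt (fun t:ℝ => 1 - t + t^2) (-1 + 2*s) s := by
    have h2 : HasDerivAt (fun t:ℝ => t^2) (2*s) s := by
      simpa using hasDerivAt_pow 2 s
    exact hdm.add h2
  have hinner := hdq.sub ((hdc.mul hdD).mul hdF)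
  have hN := hdP.mul hinner
  have hden := ((hdc.neg).const_mul (3:ℝ)).mul hdD
  have hMne : 3 * (-((1-s) ^ ((1:ℝ)/3))) * (1-s+s^2) ≠ 0 := by
    intro h; rw [mul_eq_zero, mul_eq_zero] at h
    rcases h with (h|h) | h
    · norm_num at h
    · exact hc.ne' (by linarith [neg_eq_zero.mp h])
    · exact hD.ne' h
  have hdiv := hN.div hden hMne
  have hgoal : HasDerivAt (fun t => t ^ ((2:ℝ)/3) *
      (1 - 3*t + 2*t^2 - (1 - t) ^ ((1:ℝ)/3) * (1 - t + t^2) * S ca t)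
      / (3 * (-((1 - t) ^ ((1:ℝ)/3))) * (1 - t + t^2)))
      (s ^ ((2:ℝ)/3) * ((1 - s) ^ ((1:ℝ)/3))^2 / (1 - s + s^2)^2) s := by
    refine hdiv.congr_deriv ?_
    symm
    simp only [Pi.mul_apply, Pi.sub_apply, Pi.neg_apply]
    -- now the algebraic identification
    set P := s ^ ((2:ℝ)/3) with hPdef
    set c := (1-s) ^ ((1:ℝ)/3) with hcdef
    set F := S ca s with hFdef
    set F' := S' ca s with hF'def
    have hc3 : c^3 = 1 - s := by
      rw [hcdef, ← Real.rpow_natCast ((1-s) ^ ((1:ℝ)/3)) 3, ← Real.rpow_mul h1s.le]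
      norm_num
    have e1 : s ^ ((2:ℝ)/3 - 1) = P / s := by
      rw [hPdef, show (2:ℝ)/3 - 1 = 2/3 + (-1) by ring, Real.rpow_add hs0, Real.rpow_neg_one]
      ring
    have e2 : (1-s) ^ ((1:ℝ)/3 - 1) = c / (1 - s) := by
      rw [hcdef, show (1:ℝ)/3 - 1 = 1/3 + (-1) by ring, Real.rpow_add h1s, Real.rpow_neg_one]
      ring
    have hBval : S cb s = 1 / c := by
      have hb := binom (x := s) ⟨by linarith, hs1⟩
      field_simp [hcdef] at hb ⊢
      linarith [hb]
    have hFkey : 3 * (s * F') * c = 2 - 2 * (c * F) := by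
      have h := F_rel habs
      rw [hBval] at h
      field_simp [hF'def, hFdef] at h ⊢
      linarith [h]
    rw [e1, e2]
    field_simp
    linear_combination
      (-P*(1-s)*(1-s+s^2)^2) * hFkey + (9*P*s*(1-s)) * hc3
  exact hgoal

noncomputable def wfun (s : ℝ) : ℝ :=
  s ^ ((2:ℝ)/3) * ((1 - s) ^ ((1:ℝ)/3))^2 / (1 - s + s^2)^2

lemma hasDerivAt_watts' {s : ℝ} (hs : s ∈ Set.Ioo (0:ℝ) 1) :
    HasDerivAt wattsODEsol (wfun s) s := hasDerivAt_watts hs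

lemma wfun_pos {s : ℝ} (hs : s ∈ Set.Ioo (0:ℝ) 1) : 0 < wfun s := by
  obtain ⟨hs0, hs1⟩ := hs
  have h1s : 0 < 1 - s := by linarith
  have hD : (0:ℝ) < 1 - s + s^2 := by nlinarith
  have := Real.rpow_pos_of_pos hs0 ((2:ℝ)/3)
  have := Real.rpow_pos_of_pos h1s ((1:ℝ)/3)
  rw [wfun]; positivity

lemma wfun_ode {s : ℝ} (hs : s ∈ Set.Ioo (0:ℝ) 1) :
    ∃ w', HasDerivAt wfun w' s ∧
      2*(1 - 6*s^2 + 4*s^3) * wfun s + 3*s*(-1 + 2*s - 2*s^2 + s^3) * w' = 0 := by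
  obtain ⟨hs0, hs1⟩ := hs
  have h1s : 0 < 1 - s := by linarith
  have hD : (0:ℝ) < 1 - s + s^2 := by nlinarith
  have hP : 0 < s ^ ((2:ℝ)/3) := Real.rpow_pos_of_pos hs0 _
  have hc : 0 < (1-s) ^ ((1:ℝ)/3) := Real.rpow_pos_of_pos h1s _
  have hdP : HasDerivAt (fun t:ℝ => t ^ ((2:ℝ)/3)) ((2:ℝ)/3 * s ^ ((2:ℝ)/3 - 1)) s :=
    Real.hasDerivAt_rpow_const (Or.inl hs0.ne')
  have hdm : HasDerivAt (fun t:ℝ => 1 - t) (-1) s := by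
    simpa using (hasDerivAt_id s).const_sub 1
  have hdc : HasDerivAt (fun t:ℝ => (1 - t) ^ ((1:ℝ)/3))
      ((1:ℝ)/3 * (1-s) ^ ((1:ℝ)/3 - 1) * -1) s :=
    (Real.hasDerivAt_rpow_const (p := (1:ℝ)/3) (Or.inl h1s.ne')).comp s hdm
  have hdD : HasDerivAt (fun t:ℝ => 1 - t + t^2) (-1 + 2*s) s := by
    have h2 : HasDerivAt (fun t:ℝ => t^2) (2*s) s := by
      simpa using hasDerivAt_pow 2 s
    exact hdm.add h2
  have hN := hdP.mul (hdc.pow 2)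
  have hden := hdD.pow 2
  have hMne : (1-s+s^2)^2 ≠ 0 := by positivity
  have hdiv := hN.div hden hMne
  refine ⟨_, hdiv, ?_⟩
  simp only [Pi.mul_apply, Pi.pow_apply]
  have e1 : s ^ ((2:ℝ)/3 - 1) = s ^ ((2:ℝ)/3) / s := by
    rw [show (2:ℝ)/3 - 1 = 2/3 + (-1) by ring, Real.rpow_add hs0, Real.rpow_neg_one]; ring
  have e2 : (1-s) ^ ((1:ℝ)/3 - 1) = (1-s) ^ ((1:ℝ)/3) / (1 - s) := by
    rw [show (1:ℝ)/3 - 1 = 1/3 + (-1) by ring, Real.rpow_add h1s, Real.rpow_neg_one]; ring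
  set P := s ^ ((2:ℝ)/3)
  set c := (1-s) ^ ((1:ℝ)/3)
  rw [wfun]
  rw [e1, e2]
  field_simp
  ring

end Watts




open Watts in
/-- Every C² solution on (0,1) of
`2(1-6s²+4s³) f'(s) + 3s(-1+2s-2s²+s³) f''(s) = 0`
is an affine combination `C₂ + C₁ · wattsODEsol`. -/
theorem ode_general_solution (f f' f'' : ℝ → ℝ)
    (hf' : ∀ s ∈ Set.Ioo (0:ℝ) 1, HasDerivAt f (f' s) s)
    (hf'' : ∀ s ∈ Set.Ioo (0:ℝ) 1, HasDerivAt f' (f'' s) s)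
    (hcont : ContinuousOn f'' (Set.Ioo (0:ℝ) 1))
    (hode : ∀ s ∈ Set.Ioo (0:ℝ) 1,
      2 * (1 - 6*s^2 + 4*s^3) * f' s + 3 * s * (-1 + 2*s - 2*s^2 + s^3) * f'' s = 0) :
    ∃ C₁ C₂ : ℝ, ∀ s ∈ Set.Ioo (0:ℝ) 1, f s = C₂ + C₁ * wattsODEsol s := by
  have hhalf : (1/2 : ℝ) ∈ Set.Ioo (0:ℝ) 1 := by norm_num
  set C₁ : ℝ := f' (1/2) / wfun (1/2) with hC₁
  set C₂ : ℝ := f (1/2) - C₁ * wattsODEsol (1/2) with hC₂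
  -- Step 1 : f' = C₁ • wfun on Ioo
  have step1 : ∀ s ∈ Set.Ioo (0:ℝ) 1, f' s = C₁ * wfun s := by
    have hR : ∀ x ∈ Set.Ioo (0:ℝ) 1, HasDerivAt (fun t => f' t / wfun t) 0 x := by
      intro x hx
      obtain ⟨w', hw', hwode⟩ := wfun_ode hx
      have hwx := wfun_pos hx
      have h := (hf'' x hx).div hw' hwx.ne'
      refine h.congr_deriv ?_
      symm
      obtain ⟨hx0, hx1⟩ := hx
      have hBne : 3 * x * (-1 + 2*x - 2*x^2 + x^3) ≠ 0 := by
        have h1x : 0 < 1 - x := by linarith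
        have hD : (0:ℝ) < 1 - x + x^2 := by nlinarith
        have : -1 + 2*x - 2*x^2 + x^3 = -((1-x)*(1-x+x^2)) := by ring
        rw [this]
        intro hcontra
        rcases mul_eq_zero.mp hcontra with h | h
        · rcases mul_eq_zero.mp h with h | h
          · norm_num at h
          · exact hx0.ne' h
        · exact (by positivity : (0:ℝ) < (1-x)*(1-x+x^2)).ne' (neg_eq_zero.mp h)
      have hkey : f'' x * wfun x - f' x * w' = 0 := by
        have h1 := hode x ⟨hx0, hx1⟩
        have h2 := hwode
        have h3 : (3 * x * (-1 + 2*x - 2*x^2 + x^3)) * (f'' x * wfun x - f' x * w') = 0 := by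
          linear_combination wfun x * h1 - f' x * h2
        exact (mul_eq_zero.mp h3).resolve_left hBne
      rw [hkey, zero_div]
    intro s hs
    have := const_of_deriv_zero (convex_Ioo _ _) isOpen_Ioo hR hs hhalf
    have hws := wfun_pos hs
    rw [hC₁, ← this]
    field_simp
  -- Step 2 : f - C₁ • wattsODEsol is constant
  have step2 : ∀ x ∈ Set.Ioo (0:ℝ) 1,
      HasDerivAt (fun t => f t - C₁ * wattsODEsol t) 0 x := by
    intro x hx
    have h := (hf' x hx).sub ((hasDerivAt_watts' hx).const_mul C₁)
    rw [step1 x hx] at h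
    exact h.congr_deriv (sub_self _)
  refine ⟨C₁, C₂, fun s hs => ?_⟩
  have := const_of_deriv_zero (convex_Ioo _ _) isOpen_Ioo step2 hs hhalf
  rw [hC₂]
  linarith [this]
end
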